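/- arXiv:1409.4321 — 5 statements merged into one kernel-verified Lean document; each statement's English description precedes it below -/
import Mathlib

section
/- Let K ⊆ ℝ^m be a nonempty compact set and let G_0, G_1, …, G_p : K → ℝ^{n×n} be continuous maps taking values in the symmetric matrices. Define G(x, δ) = G_0(δ) + Σ_{i=1}^p x_i G_i(δ) for x ∈ ℝ^p, δ ∈ K. If for every δ ∈ K there exists x(δ) ∈ ℝ^p such that G(x(δ), δ) is positive definite, then there exist real polynomial functions x_1^*, …, x_p^* in the m real variables δ_1, …, δ_m such that for every δ ∈ K the matrix G(x^*(δ), δ) is positive definite, where x^*(δ) = (x_1^*(δ), …, x_p^*(δ)). -/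
/-! The feasible set `{x | G(x, δ) ≻ 0}` is convex, and since positive definiteness is an open
condition a solution at `δ₀` remains one near `δ₀`. A partition of unity on `K` glues these
locally constant solutions into a continuous one, `u`. By compactness of `K`, `G(y, δ) ≻ 0` for
every `y` uniformly `ε`-close to `u(δ)`, and Stone–Weierstrass supplies such polynomials. -/

open Matrix Filter Topology Metric

namespace Matrix

variable {n ι : Type*} [Fintype ι]

theorem isOpen_setOf_forall_dotProduct_mulVec_pos [Fintype n] :
    IsOpen {M : Matrix n n ℝ | ∀ v : n → ℝ, v ≠ 0 → 0 < v ⬝ᵥ M *ᵥ v} := by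
  refine isOpen_iff_mem_nhds.2 fun M hM => ?_
  have hcont : Continuous fun z : Matrix n n ℝ × (n → ℝ) => z.2 ⬝ᵥ z.1 *ᵥ z.2 :=
    continuous_snd.dotProduct (continuous_fst.matrix_mulVec continuous_snd)
  have hsphere : ∀ᶠ N in 𝓝 M, ∀ v ∈ sphere (0 : n → ℝ) 1, 0 < v ⬝ᵥ N *ᵥ v :=
    (isCompact_sphere 0 1).eventually_forall_of_forall_eventually fun v hv =>
      (hcont.tendsto (M, v)).eventually <|
        lt_mem_nhds (hM v (ne_zero_of_mem_unit_sphere ⟨v, hv⟩))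
  filter_upwards [hsphere] with N hN v hv
  have hnorm : ‖v‖ ≠ 0 := norm_ne_zero_iff.2 hv
  have hw : ‖v‖⁻¹ • v ∈ sphere (0 : n → ℝ) 1 := by simp [norm_smul, hnorm]
  have hpos := hN _ hw
  rw [mulVec_smul, dotProduct_smul, smul_dotProduct, smul_eq_mul, smul_eq_mul, ← mul_assoc]
    at hpos
  exact pos_of_mul_pos_right hpos (by positivity)

theorem isOpen_setOf_posDef [Fintype n] {Y : Type*} [TopologicalSpace Y] {F : Y → Matrix n n ℝ}
    (hF : Continuous F) (hsymm : ∀ y, (F y).IsSymm) : IsOpen {y | (F y).PosDef} := by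
  convert isOpen_setOf_forall_dotProduct_mulVec_pos.preimage hF using 1
  ext y
  simp [posDef_iff_dotProduct_mulVec, hsymm y]

theorem isSymm_add_sum_smul {A : Matrix n n ℝ} {B : ι → Matrix n n ℝ} (hA : A.IsSymm)
    (hB : ∀ i, (B i).IsSymm) (x : ι → ℝ) : (A + ∑ i, x i • B i).IsSymm := by
  simp only [IsSymm, transpose_add, transpose_sum, transpose_smul, hA.eq, (hB _).eq]

theorem convex_setOf_posDef_add_sum_smul [Fintype n] (A : Matrix n n ℝ)
    (B : ι → Matrix n n ℝ) :
    Convex ℝ {x : ι → ℝ | (A + ∑ i, x i • B i).PosDef} := by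
  refine convex_iff_forall_pos.2 fun x hx y hy a b ha hb hab => ?_
  obtain rfl : b = 1 - a := by linarith
  have hcomb : A + ∑ i, (a • x + (1 - a) • y) i • B i
      = a • (A + ∑ i, x i • B i) + (1 - a) • (A + ∑ i, y i • B i) := by
    simp only [Pi.add_apply, Pi.smul_apply, smul_eq_mul, add_smul, mul_smul,
      Finset.sum_add_distrib, smul_add, Finset.smul_sum]
    module
  simp only [Set.mem_ofPred_eq, hcomb]
  exact (hx.smul ha).add (hy.smul hb)

section

variable [Fintype n] {X : Type*} [TopologicalSpace X] {A : X → Matrix n n ℝ}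
  {B : ι → X → Matrix n n ℝ}

theorem isOpen_setOf_posDef_add_sum_smul (hA : Continuous A) (hB : ∀ i, Continuous (B i))
    (hAs : ∀ δ, (A δ).IsSymm) (hBs : ∀ i δ, (B i δ).IsSymm) :
    IsOpen {z : X × (ι → ℝ) | (A z.1 + ∑ i, z.2 i • B i z.1).PosDef} :=
  isOpen_setOf_posDef (by fun_prop) fun z => isSymm_add_sum_smul (hAs z.1) (hBs · z.1) z.2

theorem exists_continuous_posDef_add_sum_smul [NormalSpace X] [ParacompactSpace X]
    (hA : Continuous A) (hB : ∀ i, Continuous (B i))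
    (hAs : ∀ δ, (A δ).IsSymm) (hBs : ∀ i δ, (B i δ).IsSymm)
    (hfeas : ∀ δ, ∃ x : ι → ℝ, (A δ + ∑ i, x i • B i δ).PosDef) :
    ∃ u : C(X, ι → ℝ), ∀ δ, (A δ + ∑ i, u δ i • B i δ).PosDef := by
  refine exists_continuous_forall_mem_convex_of_local_const
    (fun δ => convex_setOf_posDef_add_sum_smul (A δ) (B · δ)) fun δ => ?_
  obtain ⟨x, hx⟩ := hfeas δ
  have hopen := isOpen_setOf_posDef_add_sum_smul hA hB hAs hBs
  exact ⟨x, (hopen.preimage (Continuous.prodMk_left x)).mem_nhds hx⟩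

end

theorem exists_pos_forall_dist_lt_posDef_add_sum_smul [Fintype n] {X : Type*} [PseudoMetricSpace X]
    [CompactSpace X] {A : X → Matrix n n ℝ} {B : ι → X → Matrix n n ℝ}
    (hA : Continuous A) (hB : ∀ i, Continuous (B i))
    (hAs : ∀ δ, (A δ).IsSymm) (hBs : ∀ i δ, (B i δ).IsSymm) (u : C(X, ι → ℝ))
    (hu : ∀ δ, (A δ + ∑ i, u δ i • B i δ).PosDef) :
    ∃ ε > 0, ∀ δ (y : ι → ℝ), dist y (u δ) < ε →
      (A δ + ∑ i, y i • B i δ).PosDef := by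
  have hgraph : IsCompact (Set.range fun δ => (δ, u δ)) :=
    isCompact_range (continuous_id.prodMk u.continuous)
  obtain ⟨ε, hε, hthick⟩ := hgraph.exists_thickening_subset_open
    (isOpen_setOf_posDef_add_sum_smul hA hB hAs hBs) (Set.range_subset_iff.2 hu)
  refine ⟨ε, hε, fun δ y hy =>
    hthick (a := (δ, y)) (mem_thickening_iff.2 ⟨(δ, u δ), ⟨δ, rfl⟩, ?_⟩)⟩
  simpa [Prod.dist_eq] using hy

end Matrix

theorem MvPolynomial.exists_forall_abs_eval_sub_lt {σ : Type*} (K : Set (σ → ℝ))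
    [CompactSpace K] (f : C(K, ℝ)) {ε : ℝ} (hε : 0 < ε) :
    ∃ q : MvPolynomial σ ℝ, ∀ x : K, |eval (x : σ → ℝ) q - f x| < ε := by
  let coord : σ → C(K, ℝ) := fun a =>
    ⟨fun x => (x : σ → ℝ) a, (continuous_apply a).comp continuous_subtype_val⟩
  have heval (q : MvPolynomial σ ℝ) (x : K) : aeval coord q x = eval (x : σ → ℝ) q :=
    congrArg (· q) (comp_aeval (R := ℝ) coord (ContinuousMap.evalAlgHom ℝ ℝ x))
  have hsep : (aeval (R := ℝ) coord).range.SeparatesPoints := by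
    rintro x y hxy
    obtain ⟨a, ha⟩ := Function.ne_iff.1 (Subtype.coe_ne_coe.2 hxy)
    exact ⟨coord a, ⟨coord a, ⟨X a, aeval_X _ _⟩, rfl⟩, ha⟩
  obtain ⟨⟨g, q, rfl⟩, hg⟩ :=
    ContinuousMap.exists_mem_subalgebra_near_continuous_of_separatesPoints _ hsep f f.continuous
      ε hε
  exact ⟨q, fun x => by simpa [heval] using hg x⟩

theorem stmt0_general (m n p : ℕ)
    (K : Set (Fin m → ℝ)) (hK : IsCompact K)
    (G0 : (Fin m → ℝ) → Matrix (Fin n) (Fin n) ℝ)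
    (G : Fin p → (Fin m → ℝ) → Matrix (Fin n) (Fin n) ℝ)
    (hG0c : ContinuousOn G0 K) (hGc : ∀ i, ContinuousOn (G i) K)
    (hG0s : ∀ δ ∈ K, (G0 δ).IsSymm) (hGs : ∀ i, ∀ δ ∈ K, (G i δ).IsSymm)
    (hfeas : ∀ δ ∈ K, ∃ x : Fin p → ℝ, (G0 δ + ∑ i, x i • G i δ).PosDef) :
    ∃ xstar : Fin p → MvPolynomial (Fin m) ℝ,
      ∀ δ ∈ K,
        (G0 δ + ∑ i, (MvPolynomial.eval δ (xstar i)) • G i δ).PosDef := by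
  have : CompactSpace K := isCompact_iff_compactSpace.mp hK
  have hA : Continuous (K.domRestrict G0) := hG0c.domRestrict
  have hB (i) : Continuous (K.domRestrict (G i)) := (hGc i).domRestrict
  have hAs (δ : K) : (G0 δ).IsSymm := hG0s δ δ.2
  have hBs (i) (δ : K) : (G i δ).IsSymm := hGs i δ δ.2
  obtain ⟨u, hu⟩ :=
    Matrix.exists_continuous_posDef_add_sum_smul hA hB hAs hBs fun δ => hfeas δ δ.2
  obtain ⟨ε, hε, hrobust⟩ :=
    Matrix.exists_pos_forall_dist_lt_posDef_add_sum_smul hA hB hAs hBs u hu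
  choose q hq using fun i =>
    MvPolynomial.exists_forall_abs_eval_sub_lt K ⟨fun δ => u δ i, by fun_prop⟩ hε
  refine ⟨q, fun δ hδ => hrobust ⟨δ, hδ⟩ _ ((dist_pi_lt_iff hε).2 fun i => ?_)⟩
  simpa [Real.dist_eq] using hq i ⟨δ, hδ⟩

/-- Bliman's theorem: if the real-parameter-dependent LMI
`G(x, δ) = G₀(δ) + ∑ xᵢ Gᵢ(δ) > 0` has a solution for every `δ` in a nonempty
compact set `K ⊆ ℝ^m`, then it has a solution depending polynomially on `δ`. -/
theorem stmt0 (m n p : ℕ) (hm : 0 < m) (hn : 0 < n) (hp : 0 < p)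
    (K : Set (Fin m → ℝ)) (hK : IsCompact K) (hKne : K.Nonempty)
    (G0 : (Fin m → ℝ) → Matrix (Fin n) (Fin n) ℝ)
    (G : Fin p → (Fin m → ℝ) → Matrix (Fin n) (Fin n) ℝ)
    (hG0c : ContinuousOn G0 K) (hGc : ∀ i, ContinuousOn (G i) K)
    (hG0s : ∀ δ ∈ K, (G0 δ).IsSymm) (hGs : ∀ i, ∀ δ ∈ K, (G i δ).IsSymm)
    (hfeas : ∀ δ ∈ K, ∃ x : Fin p → ℝ, (G0 δ + ∑ i, x i • G i δ).PosDef) :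
    ∃ xstar : Fin p → MvPolynomial (Fin m) ℝ,
      ∀ δ ∈ K,
        (G0 δ + ∑ i, (MvPolynomial.eval δ (xstar i)) • G i δ).PosDef :=
  stmt0_general m n p K hK G0 G hG0c hGc hG0s hGs hfeas
end

section
/- Let K ⊆ ℝ^m be a compact set and let G_0, G_1, …, G_p : K → ℝ^{n×n} be continuous maps taking values in the symmetric matrices, with G(x, δ) = G_0(δ) + Σ_{i=1}^p x_i G_i(δ). Let α > 0 be such that for every δ ∈ K there exists x ∈ ℝ^p with G(x, δ) − 2α·I positive semidefinite. Define the set-valued map F on K by F(δ) = { x ∈ ℝ^p : G(x, δ) − α·I is positive semidefinite }. Then for every δ ∈ K the set F(δ) is nonempty, closed and convex, and F is lower semicontinuous: for every δ_0 ∈ K and every open set U ⊆ ℝ^p with F(δ_0) ∩ U ≠ ∅, there exists a neighborhood V of δ_0 in K such that F(δ) ∩ U ≠ ∅ for every δ ∈ V. -/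
/-!
`F δ` is the preimage of the closed convex cone of positive semidefinite matrices under an
affine map of `x`, hence closed and convex, and it contains every `x` with `G(x, δ) ⪰ 2αI`.
For lower semicontinuity, move a point `x₀ ∈ F δ₀ ∩ U` slightly towards a point `x₁` with
`G(x₁, δ₀) ⪰ 2αI`: the point `xₜ = (1 - t) x₀ + t x₁` stays in `U` and satisfies
`G(xₜ, δ₀) ⪰ (1 + t) αI`. The margin `tα` absorbs the perturbation `G(xₜ, δ) - G(xₜ, δ₀)` for
`δ` near `δ₀`, since a symmetric matrix whose entries are bounded by `ε` is `⪰ -nεI`.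
-/

open Matrix Finset Filter Topology

namespace Matrix

theorem isClosed_setOf_posSemidef {ι R : Type*} [Fintype ι] [CommRing R] [PartialOrder R]
    [StarRing R] [TopologicalSpace R] [IsTopologicalRing R] [ContinuousStar R]
    [OrderClosedTopology R] : IsClosed {A : Matrix ι ι R | A.PosSemidef} := by
  simp only [posSemidef_iff_dotProduct_mulVec, Set.ofPred_and, Set.ofPred_forall]
  refine (isClosed_eq (by fun_prop) continuous_id).inter (isClosed_iInter fun x => ?_)
  exact isClosed_le continuous_const (by simp only [dotProduct, mulVec]; fun_prop)

variable {ι : Type*} [Fintype ι]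

theorem abs_dotProduct_mulVec_le {D : Matrix ι ι ℝ} {ε : ℝ} (hD : ∀ i j, |D i j| ≤ ε)
    (v : ι → ℝ) : |v ⬝ᵥ D *ᵥ v| ≤ Fintype.card ι * ε * ∑ i, v i ^ 2 := by
  rcases isEmpty_or_nonempty ι with _ | ⟨⟨i₀⟩⟩
  · simp
  have hε : 0 ≤ ε := (abs_nonneg _).trans (hD i₀ i₀)
  calc |v ⬝ᵥ D *ᵥ v| = |∑ i, ∑ j, v i * D i j * v j| := by
        simp only [dotProduct, mulVec, Finset.mul_sum, mul_assoc]
    _ ≤ ∑ i, ∑ j, ε * (|v i| * |v j|) := by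
        refine (abs_sum_le_sum_abs _ _).trans (sum_le_sum fun i _ => ?_)
        refine (abs_sum_le_sum_abs _ _).trans (sum_le_sum fun j _ => ?_)
        rw [abs_mul, abs_mul, mul_comm ε, mul_right_comm]
        gcongr
        exact hD i j
    _ = ε * (∑ i, |v i|) ^ 2 := by
        simp_rw [sq, sum_mul_sum, Finset.mul_sum]
    _ ≤ ε * (Fintype.card ι * ∑ i, |v i| ^ 2) := by
        gcongr; exact sq_sum_le_card_mul_sum_sq
    _ = _ := by simp only [sq_abs]; ring

variable [DecidableEq ι]

theorem posSemidef_smul_one_add_of_abs_le {D : Matrix ι ι ℝ} (hD : D.IsHermitian) {ε c : ℝ}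
    (hDε : ∀ i j, |D i j| ≤ ε) (hc : Fintype.card ι * ε ≤ c) : (c • 1 + D).PosSemidef := by
  refine .of_dotProduct_mulVec_nonneg ((isHermitian_one.smul (.all c)).add hD) fun v => ?_
  have hv : star v ⬝ᵥ (c • 1 + D) *ᵥ v = c * ∑ i, v i ^ 2 + v ⬝ᵥ D *ᵥ v := by
    simp [add_mulVec, smul_mulVec, dotProduct, sq, Finset.mul_sum, mul_add, sum_add_distrib,
      mul_left_comm]
  have := abs_le.1 (abs_dotProduct_mulVec_le hDε v)
  nlinarith [sum_nonneg fun i (_ : i ∈ univ) => sq_nonneg (v i)]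

theorem eventually_posSemidef_of_tendsto {X : Type*} {l : Filter X} {f : X → Matrix ι ι ℝ}
    {A : Matrix ι ι ℝ} {c : ℝ} (hf : Tendsto f l (𝓝 A)) (hherm : ∀ᶠ x in l, (f x).IsHermitian)
    (hA : (A - c • 1).PosSemidef) (hc : 0 < c) : ∀ᶠ x in l, (f x).PosSemidef := by
  set ε := c / (Fintype.card ι + 1)
  have hε : 0 < ε := by positivity
  have hnear : ∀ᶠ x in l, ∀ i j, |f x i j - A i j| ≤ ε :=
    eventually_all.2 fun i => eventually_all.2 fun j =>
      (Metric.tendsto_nhds.1 (tendsto_pi_nhds.1 (tendsto_pi_nhds.1 hf i) j) ε hε).mono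
        fun x hx => hx.le
  have hcard : Fintype.card ι * ε ≤ c := by
    rw [mul_div_assoc', div_le_iff₀ (by positivity)]; nlinarith
  have hAherm : A.IsHermitian := by
    simpa using hA.isHermitian.add (isHermitian_one.smul (.all c))
  filter_upwards [hnear, hherm] with x hx hxherm
  have hsplit : f x = (A - c • 1) + (c • 1 + (f x - A)) := by abel
  rw [hsplit]
  exact hA.add (posSemidef_smul_one_add_of_abs_le (hxherm.sub hAherm) hx hcard)

end Matrix

theorem exists_lineMap_mem_of_mem_nhds {E : Type*} [AddCommGroup E] [Module ℝ E]
    [TopologicalSpace E] [IsTopologicalAddGroup E] [ContinuousSMul ℝ E] {x₀ : E} {U : Set E}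
    (hU : U ∈ 𝓝 x₀) (x₁ : E) : ∃ t ∈ Set.Ioc (0 : ℝ) 1, AffineMap.lineMap x₀ x₁ t ∈ U := by
  have hlim : Tendsto (AffineMap.lineMap x₀ x₁ : ℝ → E) (𝓝[>] 0) (𝓝 x₀) :=
    (AffineMap.lineMap_continuous.tendsto' 0 x₀ (by simp)).mono_left nhdsWithin_le_nhds
  obtain ⟨t, htU, ht⟩ := ((hlim.eventually hU).and (Ioc_mem_nhdsGT zero_lt_one)).exists
  exact ⟨t, ht, htU⟩

section AffinePencil

variable {ι n : Type*} [Fintype ι]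

def affinePencil {M : Type*} [AddCommGroup M] [Module ℝ M] (A₀ : M) (A : ι → M) :
    (ι → ℝ) →ᵃ[ℝ] M :=
  (Fintype.linearCombination ℝ A).toAffineMap + AffineMap.const ℝ (ι → ℝ) A₀

theorem affinePencil_apply {M : Type*} [AddCommGroup M] [Module ℝ M] (A₀ : M) (A : ι → M)
    (x : ι → ℝ) : affinePencil A₀ A x = A₀ + ∑ i, x i • A i := by
  simp [affinePencil, Fintype.linearCombination_apply, add_comm]

theorem isHermitian_affinePencil {A₀ : Matrix n n ℝ} {A : ι → Matrix n n ℝ}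
    (h₀ : A₀.IsHermitian) (h : ∀ i, (A i).IsHermitian) (x : ι → ℝ) :
    (affinePencil A₀ A x).IsHermitian := by
  rw [affinePencil_apply]
  exact h₀.add (isSelfAdjoint_sum univ fun i _ => (h i).smul (.all (x i)))

variable [DecidableEq n]

def lmiFeasibleSet (A₀ : Matrix n n ℝ) (A : ι → Matrix n n ℝ) (c : ℝ) : Set (ι → ℝ) :=
  {x | (affinePencil A₀ A x - c • 1).PosSemidef}

section

variable {A₀ : Matrix n n ℝ} {A : ι → Matrix n n ℝ}

theorem isClosed_lmiFeasibleSet [Fintype n] (c : ℝ) : IsClosed (lmiFeasibleSet A₀ A c) :=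
  isClosed_setOf_posSemidef.preimage (f := fun x => affinePencil A₀ A x - c • 1)
    (by simp only [affinePencil_apply]; fun_prop)

theorem lmiFeasibleSet_anti {c c' : ℝ} (h : c ≤ c') :
    lmiFeasibleSet A₀ A c' ⊆ lmiFeasibleSet A₀ A c := fun x hx => by
  have hsplit : affinePencil A₀ A x - c • 1 = (affinePencil A₀ A x - c' • 1) + (c' - c) • 1 := by
    module
  simpa only [lmiFeasibleSet, Set.mem_ofPred_eq, hsplit] using
    hx.add (PosSemidef.one.smul (sub_nonneg.2 h))

theorem lineMap_mem_lmiFeasibleSet {x₀ x₁ : ι → ℝ} {c₀ c₁ t : ℝ}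
    (h₀ : x₀ ∈ lmiFeasibleSet A₀ A c₀) (h₁ : x₁ ∈ lmiFeasibleSet A₀ A c₁) (ht : t ∈ Set.Icc 0 1) :
    AffineMap.lineMap x₀ x₁ t ∈ lmiFeasibleSet A₀ A ((1 - t) * c₀ + t * c₁) := by
  have hsplit : affinePencil A₀ A (AffineMap.lineMap x₀ x₁ t) - ((1 - t) * c₀ + t * c₁) • 1 =
      (1 - t) • (affinePencil A₀ A x₀ - c₀ • 1) + t • (affinePencil A₀ A x₁ - c₁ • 1) := by
    rw [AffineMap.apply_lineMap, AffineMap.lineMap_apply_module]; module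
  simp only [lmiFeasibleSet, Set.mem_ofPred_eq, hsplit]
  exact (h₀.smul (sub_nonneg.2 ht.2)).add (h₁.smul ht.1)

theorem convex_lmiFeasibleSet (c : ℝ) : Convex ℝ (lmiFeasibleSet A₀ A c) := by
  refine convex_iff_segment_subset.2 fun x₀ h₀ x₁ h₁ => ?_
  rw [segment_eq_image_lineMap]
  rintro _ ⟨t, ht, rfl⟩
  simpa [← add_mul] using lineMap_mem_lmiFeasibleSet h₀ h₁ ht

end

theorem eventually_mem_lmiFeasibleSet [Fintype n] {X : Type*} [TopologicalSpace X] {s : Set X}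
    {δ₀ : X} {A₀ : X → Matrix n n ℝ} {A : ι → X → Matrix n n ℝ}
    (hA₀ : ContinuousWithinAt A₀ s δ₀) (hA : ∀ i, ContinuousWithinAt (A i) s δ₀)
    (hA₀s : ∀ δ ∈ s, (A₀ δ).IsHermitian) (hAs : ∀ i, ∀ δ ∈ s, (A i δ).IsHermitian)
    {x : ι → ℝ} {c ε : ℝ} (hε : 0 < ε) (hx : x ∈ lmiFeasibleSet (A₀ δ₀) (A · δ₀) (c + ε)) :
    ∀ᶠ δ in 𝓝[s] δ₀, x ∈ lmiFeasibleSet (A₀ δ) (A · δ) c := by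
  have hcont : ContinuousWithinAt (fun δ => affinePencil (A₀ δ) (A · δ) x - c • 1) s δ₀ := by
    simp only [affinePencil_apply]
    exact (hA₀.add (tendsto_finsetSum _ fun i _ => (hA i).const_smul (x i))).sub
      continuousWithinAt_const
  refine eventually_posSemidef_of_tendsto hcont ?_ (by rwa [sub_sub, ← add_smul]) hε
  exact eventually_nhdsWithin_of_forall fun δ hδ =>
    (isHermitian_affinePencil (hA₀s δ hδ) (fun i => hAs i δ hδ) x).sub
      (isHermitian_one.smul (.all c))

end AffinePencil

theorem stmt2_general (m n p : ℕ)
    (K : Set (Fin m → ℝ))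
    (G0 : (Fin m → ℝ) → Matrix (Fin n) (Fin n) ℝ)
    (G : Fin p → (Fin m → ℝ) → Matrix (Fin n) (Fin n) ℝ)
    (hG0c : ContinuousOn G0 K) (hGc : ∀ i, ContinuousOn (G i) K)
    (hG0s : ∀ δ ∈ K, (G0 δ).IsSymm) (hGs : ∀ i, ∀ δ ∈ K, (G i δ).IsSymm)
    (α : ℝ) (hα : 0 < α)
    (hfeas : ∀ δ ∈ K, ∃ x : Fin p → ℝ,
      (G0 δ + ∑ i, x i • G i δ - (2 * α) • (1 : Matrix (Fin n) (Fin n) ℝ)).PosSemidef)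
    (F : (Fin m → ℝ) → Set (Fin p → ℝ))
    (hF : ∀ δ, F δ = {x : Fin p → ℝ |
      (G0 δ + ∑ i, x i • G i δ - α • (1 : Matrix (Fin n) (Fin n) ℝ)).PosSemidef}) :
    (∀ δ ∈ K, (F δ).Nonempty ∧ IsClosed (F δ) ∧ Convex ℝ (F δ)) ∧
    (∀ δ0 ∈ K, ∀ U : Set (Fin p → ℝ), IsOpen U → (F δ0 ∩ U).Nonempty →
      ∃ V ∈ nhdsWithin δ0 K, ∀ δ ∈ V ∩ K, (F δ ∩ U).Nonempty) := by
  have hFeq : ∀ δ, F δ = lmiFeasibleSet (G0 δ) (G · δ) α := fun δ => by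
    simp only [hF, lmiFeasibleSet, affinePencil_apply]
  have hfeas₂ : ∀ δ ∈ K, (lmiFeasibleSet (G0 δ) (G · δ) (2 * α)).Nonempty := by
    simpa only [Set.Nonempty, lmiFeasibleSet, Set.mem_ofPred_eq, affinePencil_apply] using hfeas
  refine ⟨fun δ hδ => ?_, fun δ₀ hδ₀ U hU ⟨x₀, hx₀, hx₀U⟩ => ?_⟩
  · rw [hFeq]
    exact ⟨(hfeas₂ δ hδ).mono (lmiFeasibleSet_anti (by linarith)), isClosed_lmiFeasibleSet α,
      convex_lmiFeasibleSet α⟩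
  obtain ⟨x₁, hx₁⟩ := hfeas₂ δ₀ hδ₀
  obtain ⟨t, ⟨ht₀, ht₁⟩, htU⟩ := exists_lineMap_mem_of_mem_nhds (hU.mem_nhds hx₀U) x₁
  have hmargin : AffineMap.lineMap x₀ x₁ t ∈ lmiFeasibleSet (G0 δ₀) (G · δ₀) (α + t * α) := by
    convert lineMap_mem_lmiFeasibleSet (hFeq δ₀ ▸ hx₀) hx₁ ⟨ht₀.le, ht₁⟩ using 2; ring
  have hV := eventually_mem_lmiFeasibleSet (hG0c δ₀ hδ₀) (fun i => hGc i δ₀ hδ₀)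
    (fun δ hδ => isHermitian_iff_isSymm.2 (hG0s δ hδ))
    (fun i δ hδ => isHermitian_iff_isSymm.2 (hGs i δ hδ)) (mul_pos ht₀ hα) hmargin
  exact ⟨_, hV, fun δ hδ => ⟨_, hFeq δ ▸ hδ.1, htU⟩⟩

/-- step ii of Bliman's proof: the set-valued map
`F(δ) = {x : G(x, δ) − α·I ⪰ 0}` has nonempty closed convex values and is
lower semicontinuous on `K`. -/
theorem stmt2 (m n p : ℕ) (hm : 0 < m) (hn : 0 < n) (hp : 0 < p)
    (K : Set (Fin m → ℝ)) (hK : IsCompact K)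
    (G0 : (Fin m → ℝ) → Matrix (Fin n) (Fin n) ℝ)
    (G : Fin p → (Fin m → ℝ) → Matrix (Fin n) (Fin n) ℝ)
    (hG0c : ContinuousOn G0 K) (hGc : ∀ i, ContinuousOn (G i) K)
    (hG0s : ∀ δ ∈ K, (G0 δ).IsSymm) (hGs : ∀ i, ∀ δ ∈ K, (G i δ).IsSymm)
    (α : ℝ) (hα : 0 < α)
    (hfeas : ∀ δ ∈ K, ∃ x : Fin p → ℝ,
      (G0 δ + ∑ i, x i • G i δ - (2 * α) • (1 : Matrix (Fin n) (Fin n) ℝ)).PosSemidef)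
    (F : (Fin m → ℝ) → Set (Fin p → ℝ))
    (hF : ∀ δ, F δ = {x : Fin p → ℝ |
      (G0 δ + ∑ i, x i • G i δ - α • (1 : Matrix (Fin n) (Fin n) ℝ)).PosSemidef}) :
    (∀ δ ∈ K, (F δ).Nonempty ∧ IsClosed (F δ) ∧ Convex ℝ (F δ)) ∧
    (∀ δ0 ∈ K, ∀ U : Set (Fin p → ℝ), IsOpen U → (F δ0 ∩ U).Nonempty →
      ∃ V ∈ nhdsWithin δ0 K, ∀ δ ∈ V ∩ K, (F δ ∩ U).Nonempty) :=
  stmt2_general m n p K G0 G hG0c hGc hG0s hGs α hα hfeas F hF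
end

section
/- Let K ⊆ ℝ^m be a nonempty compact set and let G_0, G_1, …, G_p : K → ℝ^{n×n} be continuous maps taking values in the symmetric matrices, with G(x, δ) = G_0(δ) + Σ_{i=1}^p x_i G_i(δ). If for every δ ∈ K there exists x(δ) ∈ ℝ^p such that G(x(δ), δ) is positive definite, then there exists a continuous function f : K → ℝ^p such that for every δ ∈ K the matrix G(f(δ), δ) is positive definite. -/
/-!
The feasible set `{x | G(x, δ) ≻ 0}` is convex for each `δ`, being the preimage of the convex cone
of positive definite matrices under an affine map. Positive definiteness is an open condition on
continuous families of symmetric matrices (positivity of the quadratic form on the compact unit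
sphere persists nearby), so a point feasible at `δ` stays feasible near `δ`. A partition of unity
on `K` glues these locally constant choices into a continuous one, and convexity keeps the glued
point feasible.
-/

open Matrix Topology

namespace Matrix

theorem convex_setOf_posDef {ι : Type*} : Convex ℝ {A : Matrix ι ι ℝ | A.PosDef} := by
  intro A hA B hB a b ha hb hab
  rcases ha.eq_or_lt with rfl | ha
  · simpa [show b = 1 by linarith] using hB
  · exact (hA.smul ha).add_posSemidef (hB.posSemidef.smul hb)

variable {ι : Type*} [Fintype ι]

theorem posDef_of_forall_mem_sphere {A : Matrix ι ι ℝ} (hA : A.IsHermitian)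
    (h : ∀ v ∈ Metric.sphere (0 : ι → ℝ) 1, 0 < v ⬝ᵥ A *ᵥ v) : A.PosDef := by
  refine .of_dotProduct_mulVec_pos hA fun v hv => ?_
  have hnorm : 0 < ‖v‖ := norm_pos_iff.2 hv
  have hu := h (‖v‖⁻¹ • v) (by simp [norm_smul, hnorm.ne'])
  rw [smul_dotProduct, mulVec_smul, dotProduct_smul, smul_eq_mul, smul_eq_mul, ← mul_assoc] at hu
  exact pos_of_mul_pos_right hu (by positivity)

theorem PosDef.eventually_posDef {X : Type*} [TopologicalSpace X] {A : X → Matrix ι ι ℝ}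
    {x₀ : X} (hA : ContinuousAt A x₀) (h₀ : (A x₀).PosDef)
    (hherm : ∀ᶠ x in 𝓝 x₀, (A x).IsHermitian) : ∀ᶠ x in 𝓝 x₀, (A x).PosDef := by
  have hquad (v : ι → ℝ) :
      ContinuousAt (fun z : X × (ι → ℝ) => z.2 ⬝ᵥ A z.1 *ᵥ z.2) (x₀, v) :=
    (continuous_snd.dotProduct (continuous_fst.matrix_mulVec continuous_snd)).continuousAt.comp
      ((hA.comp continuousAt_fst).prodMk continuousAt_snd)
  have hpos : ∀ᶠ x in 𝓝 x₀, ∀ v ∈ Metric.sphere (0 : ι → ℝ) 1, 0 < v ⬝ᵥ A x *ᵥ v :=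
    (isCompact_sphere 0 1).eventually_forall_of_forall_eventually fun v hv =>
      (hquad v).eventually <| lt_mem_nhds <| by
        simpa using h₀.dotProduct_mulVec_pos (ne_zero_of_mem_unit_sphere ⟨v, hv⟩)
  filter_upwards [hpos, hherm] with x hx hx' using posDef_of_forall_mem_sphere hx' hx

end Matrix

theorem Convex.setOf_add_sum_smul_mem {ι E : Type*} [Fintype ι] [AddCommGroup E] [Module ℝ E]
    {S : Set E} (hS : Convex ℝ S) (a : E) (b : ι → E) :
    Convex ℝ {x : ι → ℝ | a + ∑ i, x i • b i ∈ S} :=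
  hS.affine_preimage (AffineMap.const ℝ (ι → ℝ) a + (Fintype.linearCombination ℝ b).toAffineMap)

theorem stmt3_general (m n p : ℕ)
    (K : Set (Fin m → ℝ))
    (G0 : (Fin m → ℝ) → Matrix (Fin n) (Fin n) ℝ)
    (G : Fin p → (Fin m → ℝ) → Matrix (Fin n) (Fin n) ℝ)
    (hG0c : ContinuousOn G0 K) (hGc : ∀ i, ContinuousOn (G i) K)
    (hG0s : ∀ δ ∈ K, (G0 δ).IsSymm) (hGs : ∀ i, ∀ δ ∈ K, (G i δ).IsSymm)
    (hfeas : ∀ δ ∈ K, ∃ x : Fin p → ℝ, (G0 δ + ∑ i, x i • G i δ).PosDef) :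
    ∃ f : (Fin m → ℝ) → (Fin p → ℝ), ContinuousOn f K ∧
      ∀ δ ∈ K, (G0 δ + ∑ i, f δ i • G i δ).PosDef := by
  classical
  have hlocal (δ : K) :
      ∃ x : Fin p → ℝ, ∀ᶠ δ' : K in 𝓝 δ, (G0 δ' + ∑ i, x i • G i δ').PosDef := by
    obtain ⟨x, hx⟩ := hfeas δ δ.2
    have hcont : ContinuousOn (fun δ => G0 δ + ∑ i, x i • G i δ) K :=
      hG0c.add (continuousOn_finsetSum _ fun i _ => (hGc i).const_smul (x i))
    refine ⟨x, PosDef.eventually_posDef hcont.domRestrict.continuousAt hx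
      (.of_forall fun δ' => ?_)⟩
    exact (isHermitian_iff_isSymm.2 (hG0s δ' δ'.2)).add <|
      isSelfAdjoint_sum _ fun i _ => isHermitian_iff_isSymm.2 ((hGs i δ' δ'.2).smul (x i))
  obtain ⟨g, hg⟩ := exists_continuous_forall_mem_convex_of_local_const
    (fun δ : K => convex_setOf_posDef.setOf_add_sum_smul_mem (G0 δ) (G · δ)) hlocal
  refine ⟨fun δ => if h : δ ∈ K then g ⟨δ, h⟩ else 0, ?_,
    fun δ hδ => by simpa [hδ] using hg ⟨δ, hδ⟩⟩
  rw [continuousOn_iff_continuous_domRestrict]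
  convert g.continuous using 1
  ext δ : 1
  simp [δ.2]

/-- step iii of Bliman's proof, via Michael's selection theorem:
pointwise feasibility of the strict LMI on a nonempty compact set `K` yields a
continuous solution `f : K → ℝ^p`. -/
theorem stmt3 (m n p : ℕ) (hm : 0 < m) (hn : 0 < n) (hp : 0 < p)
    (K : Set (Fin m → ℝ)) (hK : IsCompact K) (hKne : K.Nonempty)
    (G0 : (Fin m → ℝ) → Matrix (Fin n) (Fin n) ℝ)
    (G : Fin p → (Fin m → ℝ) → Matrix (Fin n) (Fin n) ℝ)
    (hG0c : ContinuousOn G0 K) (hGc : ∀ i, ContinuousOn (G i) K)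
    (hG0s : ∀ δ ∈ K, (G0 δ).IsSymm) (hGs : ∀ i, ∀ δ ∈ K, (G i δ).IsSymm)
    (hfeas : ∀ δ ∈ K, ∃ x : Fin p → ℝ, (G0 δ + ∑ i, x i • G i δ).PosDef) :
    ∃ f : (Fin m → ℝ) → (Fin p → ℝ), ContinuousOn f K ∧
      ∀ δ ∈ K, (G0 δ + ∑ i, f δ i • G i δ).PosDef :=
  stmt3_general m n p K G0 G hG0c hGc hG0s hGs hfeas
end

section
/- Fix positive integers k1, k2 and real matrices A11 ∈ ℝ^{k1×k1}, A12 ∈ ℝ^{k1×k2}, A21 ∈ ℝ^{k2×k1}, A22 ∈ ℝ^{k2×k2}, with A22 Schur stable, and for |δ| ≤ 1 set M(δ) = A11 + A12 (I − δ A22)^{-1} δ A21. Then M(δ) is Schur stable for every δ ∈ ℂ with |δ| = 1 if and only if M(δ) is Schur stable for every δ ∈ ℂ with |δ| ≤ 1. -/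
/-!
Every eigenvalue `μ` of a matrix `a` satisfies `|μ|ⁿ ≤ ‖aⁿ‖`, and conversely, by Gelfand's
formula, a Schur stable `a` has powers of arbitrarily small norm. So on the unit circle each
`M(δ)` has a power of norm `< 1/2`; this persists near `δ`, and compactness of the circle yields
a single exponent `n` with `‖M(δ)ⁿ‖ < 1/2` all along the circle (exponents can be multiplied).
Since `A22` is Schur stable, `δ ↦ M(δ)ⁿ` is holomorphic near the closed disc, so by the maximum
modulus principle `‖M(δ)ⁿ‖ ≤ 1/2` on the whole disc, whence `|μ| < 1` there.
-/

open Matrix Filter Metric Topology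
open scoped NNReal ENNReal

def SchurStable {A : Type*} [Ring A] [Algebra ℂ A] (a : A) : Prop :=
  ∀ μ ∈ spectrum ℂ a, ‖μ‖ < 1

theorem norm_pow_mul_le {A : Type*} [NormedRing A] (a : A) {n k : ℕ} (ha : ‖a ^ n‖ ≤ 1)
    (hk : 0 < k) : ‖a ^ (n * k)‖ ≤ ‖a ^ n‖ :=
  calc ‖a ^ (n * k)‖ ≤ ‖a ^ n‖ ^ k := pow_mul a n k ▸ norm_pow_le' _ hk
    _ ≤ ‖a ^ n‖ := pow_le_of_le_one (norm_nonneg _) ha hk.ne'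

namespace SchurStable

variable {A : Type*} [NormedRing A] [NormedAlgebra ℂ A] [CompleteSpace A] {a : A}

theorem spectralRadius_lt_one (h : SchurStable a) : spectralRadius ℂ a < 1 := by
  rcases (spectrum ℂ a).eq_empty_or_nonempty with he | hne
  · simp [spectralRadius, he]
  · exact_mod_cast spectrum.spectralRadius_lt_of_forall_lt_of_nonempty hne
      fun k hk => (by exact_mod_cast h k hk : ‖k‖₊ < (1 : ℝ≥0))

theorem tendsto_pow_atTop_nhds_zero (h : SchurStable a) :
    Tendsto (fun n => a ^ n) atTop (𝓝 0) := by
  obtain ⟨c, hρc, hc1⟩ := ENNReal.lt_iff_exists_nnreal_btwn.mp h.spectralRadius_lt_one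
  have hroot : ∀ᶠ n : ℕ in atTop, (‖a ^ n‖₊ : ℝ≥0∞) ^ (1 / n : ℝ) < c :=
    (spectrum.pow_nnnorm_pow_one_div_tendsto_nhds_spectralRadius a).eventually_lt_const hρc
  have hgeom : ∀ᶠ n : ℕ in atTop, ‖a ^ n‖ ≤ (c : ℝ) ^ n := by
    filter_upwards [hroot, eventually_ne_atTop 0] with n hn hn0
    have := ENNReal.pow_le_pow_left hn.le (n := n)
    rw [one_div, ENNReal.rpow_inv_natCast_pow hn0] at this
    exact_mod_cast this
  refine squeeze_zero_norm' hgeom ?_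
  exact tendsto_pow_atTop_nhds_zero_of_lt_one c.2 (by exact_mod_cast hc1)

theorem of_norm_pow_lt_one [NormOneClass A] {n : ℕ} (hn : n ≠ 0) (h : ‖a ^ n‖ < 1) :
    SchurStable a := fun μ hμ => by
  have hle := spectrum.norm_le_norm_of_mem (spectrum.pow_mem_pow a n hμ)
  rw [norm_pow] at hle
  exact (pow_lt_one_iff_of_nonneg (norm_nonneg _) hn).mp (hle.trans_lt h)

theorem exists_forall_norm_pow_lt_of_isCompact {X : Type*} [TopologicalSpace X] {K : Set X}
    (hK : IsCompact K) {g : X → A} (hg : ContinuousOn g K) (hs : ∀ x ∈ K, SchurStable (g x))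
    {c : ℝ} (hc0 : 0 < c) (hc1 : c ≤ 1) : ∃ n, 0 < n ∧ ∀ x ∈ K, ‖g x ^ n‖ < c := by
  refine hK.induction_on (p := fun s => ∃ n, 0 < n ∧ ∀ x ∈ s, ‖g x ^ n‖ < c)
    ⟨1, one_pos, by simp⟩ ?mono ?union ?nhds
  case mono =>
    rintro s t hst ⟨n, hn, hlt⟩
    exact ⟨n, hn, fun x hx => hlt x (hst hx)⟩
  case union =>
    rintro s t ⟨n, hn, hltn⟩ ⟨m, hm, hltm⟩
    refine ⟨n * m, mul_pos hn hm, fun x hx => hx.elim (fun hx => ?_) (fun hx => ?_)⟩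
    · exact (norm_pow_mul_le _ ((hltn x hx).le.trans hc1) hm).trans_lt (hltn x hx)
    · rw [mul_comm]
      exact (norm_pow_mul_le _ ((hltm x hx).le.trans hc1) hn).trans_lt (hltm x hx)
  case nhds =>
    intro x hx
    obtain ⟨n, hlt, hn⟩ := (((hs x hx).tendsto_pow_atTop_nhds_zero.norm.eventually
      (gt_mem_nhds (by simpa using hc0))).and (eventually_gt_atTop 0)).exists
    exact ⟨{y | ‖g y ^ n‖ < c}, ((hg x hx).pow n).norm.eventually_lt_const hlt, n, hn,
      fun y hy => hy⟩

theorem of_forall_mem_frontier [NormOneClass A] {f : ℂ → A} {U : Set ℂ}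
    (hU : Bornology.IsBounded U) (hf : DiffContOnCl ℂ f U)
    (h : ∀ z ∈ frontier U, SchurStable (f z)) {z : ℂ} (hz : z ∈ closure U) :
    SchurStable (f z) := by
  have hK : IsCompact (frontier U) := isCompact_of_isClosed_isBounded isClosed_frontier
    (hU.closure.subset frontier_subset_closure)
  obtain ⟨n, hn, hlt⟩ := exists_forall_norm_pow_lt_of_isCompact hK
    (hf.continuousOn.mono frontier_subset_closure) h (c := 1 / 2) (by norm_num) (by norm_num)
  have hpow : DiffContOnCl ℂ (fun w => f w ^ n) U := ⟨hf.1.pow n, hf.2.pow n⟩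
  have hmax : ‖f z ^ n‖ ≤ 1 / 2 :=
    Complex.norm_le_of_forall_mem_frontier_norm_le hU hpow (fun w hw => (hlt w hw).le) hz
  exact of_norm_pow_lt_one hn.ne' (hmax.trans_lt (by norm_num))

end SchurStable

section upperLFT

-- Any algebra norm on square matrices would do: spectra do not depend on it.
attribute [local instance] Matrix.linftyOpNormedRing Matrix.linftyOpNormedAlgebra

variable {m n : Type*} [Fintype m] [Fintype n] [DecidableEq m] [DecidableEq n]

-- The upper linear fractional transformation `F_u(B, δ I)` of robust control.
noncomputable def upperLFT (B11 : Matrix m m ℂ) (B12 : Matrix m n ℂ) (B21 : Matrix n m ℂ)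
    (B22 : Matrix n n ℂ) (δ : ℂ) : Matrix m m ℂ :=
  B11 + B12 * Ring.inverse (1 - δ • B22) * (δ • B21)

theorem differentiableOn_upperLFT (B11 : Matrix m m ℂ) (B12 : Matrix m n ℂ)
    (B21 : Matrix n m ℂ) {B22 : Matrix n n ℂ} (h : SchurStable B22) :
    DifferentiableOn ℂ (upperLFT B11 B12 B21 B22) (closedBall 0 1) := by
  have hinv := spectrum.differentiableOn_inverse_one_sub_smul (a := B22) (r := 1)
    (by simpa using ENNReal.one_lt_inv.mpr h.spectralRadius_lt_one)
  let L : Matrix n n ℂ →L[ℂ] Matrix m m ℂ := LinearMap.toContinuousLinearMap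
    ((mulRightLinearMap m ℂ B21).comp (mulLeftLinearMap n ℂ B12))
  have hL : ∀ δ, upperLFT B11 B12 B21 B22 δ = B11 + δ • L (Ring.inverse (1 - δ • B22)) := by
    intro δ
    simp [upperLFT, L, Matrix.mul_smul]
  simp_rw [funext hL]
  exact (differentiableOn_id.smul (L.differentiable.comp_differentiableOn hinv)).const_add B11

theorem SchurStable.upperLFT_of_forall_norm_eq_one (B11 : Matrix m m ℂ)
    (B12 : Matrix m n ℂ) (B21 : Matrix n m ℂ) {B22 : Matrix n n ℂ} (h22 : SchurStable B22)
    (h : ∀ δ : ℂ, ‖δ‖ = 1 → SchurStable (upperLFT B11 B12 B21 B22 δ)) {δ : ℂ} (hδ : ‖δ‖ ≤ 1) :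
    SchurStable (upperLFT B11 B12 B21 B22 δ) := by
  cases isEmpty_or_nonempty m
  · simp [SchurStable, spectrum.of_subsingleton]
  refine SchurStable.of_forall_mem_frontier (U := ball 0 1) isBounded_ball ?_
    (fun z hz => h z ?_) ?_
  · exact (differentiableOn_upperLFT B11 B12 B21 h22).diffContOnCl_ball subset_rfl
  · simpa [frontier_ball (0 : ℂ) one_ne_zero] using hz
  · simpa [closure_ball (0 : ℂ) one_ne_zero] using hδ

end upperLFT

theorem stmt9_general (k1 k2 : ℕ)
    (A11 : Matrix (Fin k1) (Fin k1) ℝ) (A12 : Matrix (Fin k1) (Fin k2) ℝ)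
    (A21 : Matrix (Fin k2) (Fin k1) ℝ) (A22 : Matrix (Fin k2) (Fin k2) ℝ)
    (hA22 : ∀ μ ∈ spectrum ℂ (A22.map (Complex.ofReal)), ‖μ‖ < 1)
    (M : ℂ → Matrix (Fin k1) (Fin k1) ℂ)
    (hM : ∀ δ : ℂ, ‖δ‖ ≤ 1 →
      M δ = A11.map (Complex.ofReal) +
        A12.map (Complex.ofReal) *
          (1 - δ • A22.map (Complex.ofReal))⁻¹ * (δ • A21.map (Complex.ofReal))) :
    (∀ δ : ℂ, ‖δ‖ = 1 → ∀ μ ∈ spectrum ℂ (M δ), ‖μ‖ < 1) ↔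
    (∀ δ : ℂ, ‖δ‖ ≤ 1 → ∀ μ ∈ spectrum ℂ (M δ), ‖μ‖ < 1) := by
  have hM_eq : ∀ δ : ℂ, ‖δ‖ ≤ 1 → M δ = upperLFT (A11.map Complex.ofReal)
      (A12.map Complex.ofReal) (A21.map Complex.ofReal) (A22.map Complex.ofReal) δ := by
    intro δ hδ
    rw [hM δ hδ, upperLFT, Matrix.nonsing_inv_eq_ringInverse]
  refine ⟨fun hcircle δ hδ => ?_, fun hdisc δ hδ => hdisc δ hδ.le⟩
  rw [hM_eq δ hδ]
  exact SchurStable.upperLFT_of_forall_norm_eq_one _ _ _ hA22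
    (fun z hz => hM_eq z hz.le ▸ hcircle z hz) hδ

/-- with `A22` Schur stable and
`M(δ) = A11 + A12 (I − δ A22)⁻¹ δ A21`, Schur stability of `M(δ)` on the unit
circle is equivalent to Schur stability on the whole closed unit disc. -/
theorem stmt9 (k1 k2 : ℕ) (hk1 : 0 < k1) (hk2 : 0 < k2)
    (A11 : Matrix (Fin k1) (Fin k1) ℝ) (A12 : Matrix (Fin k1) (Fin k2) ℝ)
    (A21 : Matrix (Fin k2) (Fin k1) ℝ) (A22 : Matrix (Fin k2) (Fin k2) ℝ)
    (hA22 : ∀ μ ∈ spectrum ℂ (A22.map (Complex.ofReal)), ‖μ‖ < 1)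
    (M : ℂ → Matrix (Fin k1) (Fin k1) ℂ)
    (hM : ∀ δ : ℂ, ‖δ‖ ≤ 1 →
      M δ = A11.map (Complex.ofReal) +
        A12.map (Complex.ofReal) *
          (1 - δ • A22.map (Complex.ofReal))⁻¹ * (δ • A21.map (Complex.ofReal))) :
    (∀ δ : ℂ, ‖δ‖ = 1 → ∀ μ ∈ spectrum ℂ (M δ), ‖μ‖ < 1) ↔
    (∀ δ : ℂ, ‖δ‖ ≤ 1 → ∀ μ ∈ spectrum ℂ (M δ), ‖μ‖ < 1) :=
  stmt9_general k1 k2 A11 A12 A21 A22 hA22 M hM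
end

section
/- Let n ≥ 2, fix positive integers k_1, …, k_n and real matrices A_{ij} ∈ ℝ^{k_i×k_j} for i, j ∈ {1, …, n}. Let A_M = [A_{ij}]_{2≤i,j≤n} (an s×s real matrix with s = k_2 + … + k_n), B_M = [A_{21}; …; A_{n1}] ∈ ℝ^{s×k_1}, C_M = [A_{12}, …, A_{1n}] ∈ ℝ^{k_1×s}, D_M = A_{11}. For δ = (δ_2, …, δ_n) ∈ ℂ^{n−1} let Δ̃(δ) = diag(δ_2 I_{k_2}, …, δ_n I_{k_n}), and assume that I − Δ̃(δ) A_M is invertible for every δ in the torus T = { δ ∈ ℂ^{n−1} : |δ_i| = 1 for all i }; for such δ set M(δ) = D_M + C_M (I − Δ̃(δ) A_M)^{-1} Δ̃(δ) B_M ∈ ℂ^{k_1×k_1}. Suppose that for every δ ∈ T there exists a Hermitian positive definite matrix P(δ) ∈ ℂ^{k_1×k_1} with M(δ)* P(δ) M(δ) − P(δ) negative definite. Then there exist nonnegative integers g_2, …, g_n with N = g_2 + … + g_n and complex matrices A^•, E^• ∈ ℂ^{N×N}, B^•, F^• ∈ ℂ^{N×k_1}, C^• ∈ ℂ^{k_1×N},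 D^• ∈ ℂ^{k_1×k_1} such that, writing Δ̂(δ) = diag(δ_2 I_{g_2}, …, δ_n I_{g_n}): (a) E^• − Δ̂(δ) A^• is invertible for every δ ∈ T, and (b) for every δ ∈ T the matrix P^•(δ) = D^• + C^• (E^• − Δ̂(δ) A^•)^{-1} (Δ̂(δ) B^• − F^•) is Hermitian positive definite and satisfies that M(δ)* P^•(δ) M(δ) − P^•(δ) is negative definite. -/
/-!
On the torus `M` is an ILFR in `δ`, hence continuous. The pointwise Lyapunov certificates make
every `M δ` Schur stable, so by Gelfand's formula some power of `M δ` is a strict contraction, and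
compactness of the torus gives one exponent `T` that works for all `δ` at once. The truncated
Lyapunov sum `P• δ = ∑_{m < T} (M δ ^ m)ᴴ * M δ ^ m` is then `≥ 1`, and `(M δ)ᴴ * P• δ * M δ - P• δ`
telescopes to `(M δ ^ T)ᴴ * M δ ^ T - 1 < 0`. Finally ILFRs are closed under sums, products and,
on the torus where `star δ = δ⁻¹`, conjugate transposes, so `P•` is an ILFR.
-/

open Matrix
open scoped ComplexOrder

noncomputable def lyapunovSum {R : Type*} [Semiring R] [StarMul R] (a : R) (T : ℕ) : R :=
  ∑ m ∈ Finset.range T, star (a ^ m) * a ^ m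

theorem star_mul_lyapunovSum_mul_sub {R : Type*} [Ring R] [StarRing R] (a : R) (T : ℕ) :
    star a * lyapunovSum a T * a - lyapunovSum a T = star (a ^ T) * a ^ T - 1 := by
  induction T with
  | zero => simp [lyapunovSum]
  | succ T ih =>
    have hstep : star a * (star (a ^ T) * a ^ T) * a = star (a ^ (T + 1)) * a ^ (T + 1) := by
      rw [pow_succ, star_mul]
      simp only [mul_assoc]
    rw [lyapunovSum, Finset.sum_range_succ, ← lyapunovSum, mul_add, add_mul, hstep,
      ← sub_add_cancel (star a * lyapunovSum a T * a) (lyapunovSum a T), ih]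
    abel

namespace Matrix

variable {n : Type*} [Fintype n] [DecidableEq n]

theorem posDef_lyapunovSum (M : Matrix n n ℂ) {T : ℕ} (hT : 0 < T) :
    (lyapunovSum M T).PosDef := by
  obtain ⟨T, rfl⟩ := Nat.exists_eq_add_of_lt hT
  rw [lyapunovSum, zero_add, Finset.sum_range_succ']
  simp only [pow_zero, star_one, mul_one]
  exact PosDef.posSemidef_add (posSemidef_sum _ fun m _ => posSemidef_conjTranspose_mul_self _)
    PosDef.one

theorem norm_lt_one_of_mem_spectrum_of_lyapunov {M P : Matrix n n ℂ} (hP : P.PosDef)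
    (hQ : (P - Mᴴ * P * M).PosDef) {z : ℂ} (hz : z ∈ spectrum ℂ M) : ‖z‖ < 1 := by
  rw [← spectrum_toLin'] at hz
  obtain ⟨v, hv⟩ := (Module.End.hasEigenvalue_iff_mem_spectrum.mpr hz).exists_hasEigenvector
  have hMv : M *ᵥ v = z • v := by simpa using hv.apply_eq_smul
  have hsandwich : star v ⬝ᵥ ((Mᴴ * P * M) *ᵥ v) = star (M *ᵥ v) ⬝ᵥ (P *ᵥ (M *ᵥ v)) := by
    rw [mul_assoc, ← mulVec_mulVec, dotProduct_mulVec, ← star_mulVec, mulVec_mulVec]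
  have hdecay : star v ⬝ᵥ ((P - Mᴴ * P * M) *ᵥ v) =
      ((1 - ‖z‖ ^ 2 : ℝ) : ℂ) * (star v ⬝ᵥ (P *ᵥ v)) := by
    rw [sub_mulVec, dotProduct_sub, hsandwich, hMv, star_smul, mulVec_smul, smul_dotProduct,
      dotProduct_smul, smul_smul, smul_eq_mul, Complex.star_def, Complex.conj_mul']
    push_cast
    ring
  have hPv := (Complex.pos_iff.mp (hP.dotProduct_mulVec_pos hv.2)).1
  have hQv := (Complex.pos_iff.mp (hQ.dotProduct_mulVec_pos hv.2)).1
  rw [hdecay, Complex.re_ofReal_mul] at hQv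
  exact (sq_lt_one_iff₀ (norm_nonneg z)).mp (sub_pos.mp ((pos_iff_pos_of_mul_pos hQv).mpr hPv))

open scoped Matrix.Norms.L2Operator in
theorem spectralRadius_lt_one_of_lyapunov {M P : Matrix n n ℂ} (hP : P.PosDef)
    (hQ : (P - Mᴴ * P * M).PosDef) : spectralRadius ℂ M < 1 := by
  cases isEmpty_or_nonempty n
  · simp [spectralRadius, spectrum.of_subsingleton]
  · exact_mod_cast spectrum.spectralRadius_lt_of_forall_lt M fun z hz => by
      exact_mod_cast norm_lt_one_of_mem_spectrum_of_lyapunov hP hQ hz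

end Matrix

theorem exists_pow_norm_lt_one_of_spectralRadius_lt_one {A : Type*} [NormedRing A]
    [NormedAlgebra ℂ A] [CompleteSpace A] {a : A} (ha : spectralRadius ℂ a < 1) :
    ∃ n, 0 < n ∧ ‖a ^ n‖ < 1 := by
  obtain ⟨n, hlt, hn⟩ := ((spectrum.pow_nnnorm_pow_one_div_tendsto_nhds_spectralRadius a).eventually
    (gt_mem_nhds ha)).and (Filter.eventually_gt_atTop 0) |>.exists
  refine ⟨n, hn, ?_⟩
  by_contra! h
  have h1 : (1 : ENNReal) ≤ ‖a ^ n‖₊ := by exact_mod_cast h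
  exact hlt.not_ge (ENNReal.one_le_rpow h1 (by positivity))

theorem IsCompact.exists_pow_norm_lt_one {X R : Type*} [TopologicalSpace X] [NormedRing R]
    {S : Set X} (hS : IsCompact S) {f : X → R} (hf : ContinuousOn f S)
    (h : ∀ x ∈ S, ∃ n, 0 < n ∧ ‖f x ^ n‖ < 1) :
    ∃ T, 0 < T ∧ ∀ x ∈ S, ‖f x ^ T‖ < 1 := by
  choose! n hn hlt using h
  obtain ⟨t, htS, ht⟩ := hS.elim_nhdsWithin_subcover (fun x => {y | ‖f y ^ n x‖ < 1})
    fun x hx => ((hf x hx).pow _).norm.eventually (gt_mem_nhds (hlt x hx))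
  have hT : 0 < ∏ x ∈ t, n x := Finset.prod_pos fun x hx => hn x (htS x hx)
  refine ⟨_, hT, fun y hy => ?_⟩
  obtain ⟨x, hxt, hyx⟩ : ∃ x ∈ t, ‖f y ^ n x‖ < 1 := by simpa using ht hy
  obtain ⟨r, hr⟩ := Finset.dvd_prod_of_mem n hxt
  have hr0 : 0 < r := Nat.pos_of_mul_pos_left (hr ▸ hT)
  calc ‖f y ^ (∏ x ∈ t, n x)‖ = ‖(f y ^ n x) ^ r‖ := by rw [hr, pow_mul]
    _ ≤ ‖f y ^ n x‖ ^ r := norm_pow_le' _ hr0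
    _ ≤ ‖f y ^ n x‖ := pow_le_of_le_one (norm_nonneg _) hyx.le hr0.ne'
    _ < 1 := hyx

section OperatorNorm

open scoped Matrix.Norms.L2Operator MatrixOrder

variable {n : Type*} [Fintype n] [DecidableEq n]

theorem Matrix.posDef_one_sub_conjTranspose_mul_self_of_norm_lt_one {N : Matrix n n ℂ}
    (hN : ‖N‖ < 1) : (1 - Nᴴ * N).PosDef := by
  have hle := CStarAlgebra.star_mul_le_algebraMap_norm_sq (a := N)
  rw [le_iff, Algebra.algebraMap_eq_smul_one] at hle
  have hsplit : 1 - Nᴴ * N = (1 - ‖N‖ ^ 2) • (1 : Matrix n n ℂ) + ((‖N‖ ^ 2) • 1 - star N * N) := by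
    rw [sub_smul, one_smul]
    abel
  rw [hsplit]
  exact (PosDef.one.smul (by nlinarith [norm_nonneg N])).add_posSemidef hle

theorem IsCompact.exists_pow_contraction {X : Type*} [TopologicalSpace X] {S : Set X}
    (hS : IsCompact S) {f : X → Matrix n n ℂ} (hf : ContinuousOn f S)
    (h : ∀ x ∈ S, spectralRadius ℂ (f x) < 1) :
    ∃ T, 0 < T ∧ ∀ x ∈ S, (1 - (f x ^ T)ᴴ * f x ^ T).PosDef := by
  obtain ⟨T, hT, hlt⟩ := hS.exists_pow_norm_lt_one hf fun x hx =>
    exists_pow_norm_lt_one_of_spectralRadius_lt_one (h x hx)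
  exact ⟨T, hT, fun x hx => posDef_one_sub_conjTranspose_mul_self_of_norm_lt_one (hlt x hx)⟩

end OperatorNorm

def unitTorus (ι : Type*) : Set (ι → ℂ) := Set.univ.pi fun _ => Metric.sphere 0 1

theorem mem_unitTorus {ι : Type*} {δ : ι → ℂ} : δ ∈ unitTorus ι ↔ ∀ i, ‖δ i‖ = 1 := by
  simp [unitTorus]

theorem isCompact_unitTorus (ι : Type*) : IsCompact (unitTorus ι) :=
  isCompact_univ_pi fun _ => isCompact_sphere 0 1

theorem diagonal_comp_sumElim {ι σ₁ σ₂ : Type*} [DecidableEq σ₁] [DecidableEq σ₂] (δ : ι → ℂ)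
    (π₁ : σ₁ → ι) (π₂ : σ₂ → ι) :
    diagonal (fun s => δ (Sum.elim π₁ π₂ s)) =
      fromBlocks (diagonal fun s => δ (π₁ s)) 0 0 (diagonal fun s => δ (π₂ s)) := by
  rw [fromBlocks_diagonal]
  congr 1
  ext (s | s) <;> rfl

universe u

/-- An implicit linear fractional representation `D + C (E - Δ̂ A)⁻¹ (Δ̂ B - F)` over the
variables `ι`. Instead of grouping the state into blocks of sizes `g i`, each state coordinate
`s : σ` carries the variable `π s` it is scaled by, so that `Δ̂(δ) = diagonal (δ ∘ π)`;
`IsILFROn.exists_sigma_fst` regroups the state into blocks at the end. -/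
structure ILFR (ι : Type u) (K L : Type*) where
  σ : Type u
  [instFintype : Fintype σ]
  [instDecidableEq : DecidableEq σ]
  π : σ → ι
  A : Matrix σ σ ℂ
  E : Matrix σ σ ℂ
  B : Matrix σ L ℂ
  F : Matrix σ L ℂ
  C : Matrix K σ ℂ
  D : Matrix K L ℂ

attribute [instance] ILFR.instFintype ILFR.instDecidableEq

namespace ILFR

variable {ι : Type u} {K L N : Type*}

section Eval

variable (R : ILFR ι K L) (δ : ι → ℂ)

noncomputable def scaling : Matrix R.σ R.σ ℂ := diagonal fun s => δ (R.π s)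

noncomputable def pencil : Matrix R.σ R.σ ℂ := R.E - R.scaling δ * R.A

noncomputable def input : Matrix R.σ L ℂ := R.scaling δ * R.B - R.F

noncomputable def eval : Matrix K L ℂ := R.D + R.C * (R.pencil δ)⁻¹ * R.input δ

variable {R δ}

theorem eval_eq_of_pencil_mul_eq (hR : IsUnit (R.pencil δ)) {Z : Matrix R.σ L ℂ}
    (hZ : R.pencil δ * Z = R.input δ) : R.eval δ = R.D + R.C * Z := by
  rw [eval, Matrix.mul_assoc, ← hZ,
    nonsing_inv_mul_cancel_left _ _ ((isUnit_iff_isUnit_det _).mp hR)]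

theorem scaling_conjTranspose_mul_self (hδ : ∀ i, ‖δ i‖ = 1) :
    (R.scaling δ)ᴴ * R.scaling δ = 1 := by
  simp [scaling, diagonal_conjTranspose, diagonal_mul_diagonal, Complex.conj_mul', hδ]

theorem scaling_mul_conjTranspose_self (hδ : ∀ i, ‖δ i‖ = 1) :
    R.scaling δ * (R.scaling δ)ᴴ = 1 := by
  simp [scaling, diagonal_conjTranspose, diagonal_mul_diagonal, Complex.mul_conj', hδ]

end Eval

@[reducible] protected noncomputable def const (D : Matrix K L ℂ) : ILFR ι K L :=
  ⟨PEmpty, PEmpty.elim, 0, 0, 0, 0, 0, D⟩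

@[reducible] protected noncomputable def add (R₁ R₂ : ILFR ι K L) : ILFR ι K L :=
  ⟨R₁.σ ⊕ R₂.σ, Sum.elim R₁.π R₂.π, fromBlocks R₁.A 0 0 R₂.A, fromBlocks R₁.E 0 0 R₂.E,
    fromRows R₁.B R₂.B, fromRows R₁.F R₂.F, fromCols R₁.C R₂.C, R₁.D + R₂.D⟩

@[reducible] protected noncomputable def mul [Fintype L] (R₁ : ILFR ι K L) (R₂ : ILFR ι L N) :
    ILFR ι K N :=
  ⟨R₁.σ ⊕ R₂.σ, Sum.elim R₁.π R₂.π, fromBlocks R₁.A (R₁.B * R₂.C) 0 R₂.A,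
    fromBlocks R₁.E (R₁.F * R₂.C) 0 R₂.E, fromRows (R₁.B * R₂.D) R₂.B,
    fromRows (R₁.F * R₂.D) R₂.F, fromCols R₁.C (R₁.D * R₂.C), R₁.D * R₂.D⟩

/-- The state is doubled to `(z₁, z₂)` with `z₂ = Δ̂ z₁`, which moves `Δ̂` back to the left of
`A` and `B` after transposition. -/
@[reducible] protected noncomputable def conjTranspose (R : ILFR ι K L) : ILFR ι L K :=
  ⟨R.σ ⊕ R.σ, Sum.elim R.π R.π, fromBlocks 0 0 1 0, fromBlocks (-R.Aᴴ) R.Eᴴ 0 1, 0,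
    fromRows (-R.Cᴴ) 0, fromCols R.Bᴴ (-R.Fᴴ), R.Dᴴ⟩

@[reducible] protected noncomputable def reindex (R : ILFR ι K L) {τ : Type u} [Fintype τ]
    [DecidableEq τ] (e : τ ≃ R.σ) : ILFR ι K L :=
  ⟨τ, R.π ∘ e, R.A.submatrix e e, R.E.submatrix e e, R.B.submatrix e id, R.F.submatrix e id,
    R.C.submatrix id e, R.D⟩

variable (δ : ι → ℂ)

theorem pencil_add (R₁ R₂ : ILFR ι K L) :
    (R₁.add R₂).pencil δ = fromBlocks (R₁.pencil δ) 0 0 (R₂.pencil δ) := by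
  show fromBlocks R₁.E 0 0 R₂.E - diagonal (fun s => δ (Sum.elim R₁.π R₂.π s)) *
    fromBlocks R₁.A 0 0 R₂.A = _
  rw [diagonal_comp_sumElim, fromBlocks_multiply]
  ext (i | i) (j | j) <;> simp [pencil, scaling]

theorem input_add (R₁ R₂ : ILFR ι K L) :
    (R₁.add R₂).input δ = fromRows (R₁.input δ) (R₂.input δ) := by
  show diagonal (fun s => δ (Sum.elim R₁.π R₂.π s)) * fromRows R₁.B R₂.B -
    fromRows R₁.F R₂.F = _
  rw [diagonal_comp_sumElim, fromBlocks_mul_fromRows]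
  ext (i | i) j <;> simp [input, scaling]

theorem pencil_mul [Fintype L] (R₁ : ILFR ι K L) (R₂ : ILFR ι L N) :
    (R₁.mul R₂).pencil δ =
      fromBlocks (R₁.pencil δ) (-(R₁.input δ * R₂.C)) 0 (R₂.pencil δ) := by
  show fromBlocks R₁.E (R₁.F * R₂.C) 0 R₂.E - diagonal (fun s => δ (Sum.elim R₁.π R₂.π s)) *
    fromBlocks R₁.A (R₁.B * R₂.C) 0 R₂.A = _
  rw [diagonal_comp_sumElim, fromBlocks_multiply]
  ext (i | i) (j | j) <;> simp [pencil, input, scaling, Matrix.sub_mul, Matrix.mul_assoc]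

theorem input_mul [Fintype L] (R₁ : ILFR ι K L) (R₂ : ILFR ι L N) :
    (R₁.mul R₂).input δ = fromRows (R₁.input δ * R₂.D) (R₂.input δ) := by
  show diagonal (fun s => δ (Sum.elim R₁.π R₂.π s)) * fromRows (R₁.B * R₂.D) R₂.B -
    fromRows (R₁.F * R₂.D) R₂.F = _
  rw [diagonal_comp_sumElim, fromBlocks_mul_fromRows]
  ext (i | i) j <;> simp [input, scaling, Matrix.sub_mul, Matrix.mul_assoc]

theorem pencil_conjTranspose (R : ILFR ι K L) :
    R.conjTranspose.pencil δ = fromBlocks (-R.Aᴴ) R.Eᴴ (-R.scaling δ) 1 := by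
  show fromBlocks (-R.Aᴴ) R.Eᴴ 0 1 - diagonal (fun s => δ (Sum.elim R.π R.π s)) *
    fromBlocks 0 0 1 0 = _
  rw [diagonal_comp_sumElim, fromBlocks_multiply]
  ext (i | i) (j | j) <;> simp [scaling, -diagonal_neg]

theorem input_conjTranspose (R : ILFR ι K L) :
    R.conjTranspose.input δ = fromRows R.Cᴴ 0 := by
  show diagonal (fun s => δ (Sum.elim R.π R.π s)) * 0 - fromRows (-R.Cᴴ) 0 = _
  ext (i | i) j <;> simp

section Reindex

variable (R : ILFR ι K L) {τ : Type u} [Fintype τ] [DecidableEq τ] (e : τ ≃ R.σ)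

theorem scaling_reindex : (R.reindex e).scaling δ = (R.scaling δ).submatrix e e := by
  simp [scaling, submatrix_diagonal_equiv]

theorem pencil_reindex : (R.reindex e).pencil δ = (R.pencil δ).submatrix e e := by
  rw [pencil, scaling_reindex, submatrix_mul_equiv]
  rfl

theorem input_reindex : (R.reindex e).input δ = (R.input δ).submatrix e id := by
  rw [input, scaling_reindex, submatrix_mul_equiv]
  rfl

theorem eval_reindex : (R.reindex e).eval δ = R.eval δ := by
  rw [eval, pencil_reindex, input_reindex, inv_submatrix_equiv, submatrix_mul_equiv,
    submatrix_mul_equiv, submatrix_id_id, eval]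

end Reindex

end ILFR

def IsILFROn {ι : Type u} {K L : Type*} (S : Set (ι → ℂ)) (f : (ι → ℂ) → Matrix K L ℂ) : Prop :=
  ∃ R : ILFR ι K L, ∀ δ ∈ S, IsUnit (R.pencil δ) ∧ f δ = R.eval δ

variable {ι : Type u} {K L N : Type*} {S : Set (ι → ℂ)}

theorem isILFROn_iff_exists_solution {f : (ι → ℂ) → Matrix K L ℂ} :
    IsILFROn S f ↔ ∃ R : ILFR ι K L, ∀ δ ∈ S, IsUnit (R.pencil δ) ∧
      ∃ Z : Matrix R.σ L ℂ, R.pencil δ * Z = R.input δ ∧ f δ = R.D + R.C * Z := by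
  refine exists_congr fun R => forall₂_congr fun δ _ => and_congr_right fun hR => ?_
  refine ⟨fun hf => ⟨_, mul_nonsing_inv_cancel_left _ _ ((isUnit_iff_isUnit_det _).mp hR), ?_⟩,
    fun ⟨Z, hZ, hf⟩ => hf.trans (ILFR.eval_eq_of_pencil_mul_eq hR hZ).symm⟩
  rw [hf, ILFR.eval, Matrix.mul_assoc]

namespace IsILFROn

theorem of_lfr {σ : Type u} [Fintype σ] [DecidableEq σ] (π : σ → ι) (A : Matrix σ σ ℂ)
    (B : Matrix σ L ℂ) (C : Matrix K σ ℂ) (D : Matrix K L ℂ) {f : (ι → ℂ) → Matrix K L ℂ}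
    (h : ∀ δ ∈ S, IsUnit (1 - diagonal (fun s => δ (π s)) * A) ∧
      f δ = D + C * (1 - diagonal (fun s => δ (π s)) * A)⁻¹ * (diagonal (fun s => δ (π s)) * B)) :
    IsILFROn S f :=
  ⟨⟨σ, π, A, 1, B, 0, C, D⟩, fun δ hδ => ⟨(h δ hδ).1, by
    simpa [ILFR.eval, ILFR.pencil, ILFR.input, ILFR.scaling] using (h δ hδ).2⟩⟩

theorem const (D : Matrix K L ℂ) : IsILFROn S fun _ => D :=
  isILFROn_iff_exists_solution.mpr ⟨ILFR.const D, fun _ _ =>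
    ⟨isUnit_of_subsingleton _, 0, Subsingleton.elim _ _, by simp⟩⟩

theorem add {f₁ f₂ : (ι → ℂ) → Matrix K L ℂ} (h₁ : IsILFROn S f₁) (h₂ : IsILFROn S f₂) :
    IsILFROn S fun δ => f₁ δ + f₂ δ := by
  obtain ⟨R₁, h₁⟩ := isILFROn_iff_exists_solution.mp h₁
  obtain ⟨R₂, h₂⟩ := isILFROn_iff_exists_solution.mp h₂
  refine isILFROn_iff_exists_solution.mpr ⟨R₁.add R₂, fun δ hδ => ?_⟩
  obtain ⟨hR₁, Z₁, hZ₁, hf₁⟩ := h₁ δ hδ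
  obtain ⟨hR₂, Z₂, hZ₂, hf₂⟩ := h₂ δ hδ
  refine ⟨?_, fromRows Z₁ Z₂, ?_, ?_⟩
  · simp only [ILFR.pencil_add, isUnit_iff_isUnit_det, det_fromBlocks_zero₂₁] at hR₁ hR₂ ⊢
    exact hR₁.mul hR₂
  · simp [ILFR.pencil_add, ILFR.input_add, fromBlocks_mul_fromRows, hZ₁, hZ₂]
  · simp only [hf₁, hf₂, fromCols_mul_fromRows]
    abel

theorem mul [Fintype L] {f₁ : (ι → ℂ) → Matrix K L ℂ} {f₂ : (ι → ℂ) → Matrix L N ℂ}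
    (h₁ : IsILFROn S f₁) (h₂ : IsILFROn S f₂) : IsILFROn S fun δ => f₁ δ * f₂ δ := by
  obtain ⟨R₁, h₁⟩ := isILFROn_iff_exists_solution.mp h₁
  obtain ⟨R₂, h₂⟩ := isILFROn_iff_exists_solution.mp h₂
  refine isILFROn_iff_exists_solution.mpr ⟨R₁.mul R₂, fun δ hδ => ?_⟩
  obtain ⟨hR₁, Z₁, hZ₁, hf₁⟩ := h₁ δ hδ
  obtain ⟨hR₂, Z₂, hZ₂, hf₂⟩ := h₂ δ hδ
  refine ⟨?_, fromRows (Z₁ * (R₂.D + R₂.C * Z₂)) Z₂, ?_, ?_⟩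
  · simp only [ILFR.pencil_mul, isUnit_iff_isUnit_det, det_fromBlocks_zero₂₁] at hR₁ hR₂ ⊢
    exact hR₁.mul hR₂
  · simp [ILFR.pencil_mul, ILFR.input_mul, fromBlocks_mul_fromRows, hZ₂, ← Matrix.mul_assoc,
      hZ₁, Matrix.mul_add]
  · simp only [hf₁, hf₂, fromCols_mul_fromRows, Matrix.mul_add, Matrix.add_mul,
      Matrix.mul_assoc]
    abel

theorem conjTranspose {f : (ι → ℂ) → Matrix K L ℂ} (h : IsILFROn S f) (hS : S ⊆ unitTorus ι) :
    IsILFROn S fun δ => (f δ)ᴴ := by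
  obtain ⟨R, h⟩ := isILFROn_iff_exists_solution.mp h
  refine isILFROn_iff_exists_solution.mpr ⟨R.conjTranspose, fun δ hδ => ?_⟩
  obtain ⟨hR, Z, hZ, hf⟩ := h δ hδ
  have hRH : IsUnit (R.pencil δ)ᴴ := hR.star
  set u := ((R.pencil δ)ᴴ)⁻¹ * R.Cᴴ
  have hu : (R.pencil δ)ᴴ * u = R.Cᴴ :=
    mul_nonsing_inv_cancel_left _ _ ((isUnit_iff_isUnit_det _).mp hRH)
  have hΔ := ILFR.scaling_conjTranspose_mul_self (R := R) (mem_unitTorus.mp (hS hδ))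
  have hΔ' := ILFR.scaling_mul_conjTranspose_self (R := R) (mem_unitTorus.mp (hS hδ))
  have hpencilH : (R.pencil δ)ᴴ = R.Eᴴ - R.Aᴴ * (R.scaling δ)ᴴ := by
    rw [ILFR.pencil, conjTranspose_sub, conjTranspose_mul]
  refine ⟨?_, fromRows ((R.scaling δ)ᴴ * u) u, ?_, ?_⟩
  · have hSchur : -R.Aᴴ - R.Eᴴ * -R.scaling δ = (R.pencil δ)ᴴ * R.scaling δ := by
      rw [hpencilH, Matrix.sub_mul, Matrix.mul_assoc, hΔ, Matrix.mul_one, Matrix.mul_neg]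
      abel
    rw [ILFR.pencil_conjTranspose, isUnit_iff_isUnit_det, det_fromBlocks_one₂₂, hSchur, det_mul]
    exact ((isUnit_iff_isUnit_det _).mp hRH).mul (isUnit_det_of_left_inverse hΔ)
  · rw [ILFR.pencil_conjTranspose, ILFR.input_conjTranspose, fromBlocks_mul_fromRows, ← hu,
      hpencilH]
    congr 1
    · rw [Matrix.sub_mul, Matrix.neg_mul, Matrix.mul_assoc]
      abel
    · rw [Matrix.neg_mul, ← Matrix.mul_assoc, hΔ', Matrix.one_mul, neg_add_cancel]
  · have hZu : Zᴴ * R.Cᴴ = (R.input δ)ᴴ * u := by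
      rw [← hu, ← Matrix.mul_assoc, ← conjTranspose_mul, hZ]
    rw [hf, conjTranspose_add, conjTranspose_mul, hZu, ILFR.input, conjTranspose_sub,
      conjTranspose_mul, fromCols_mul_fromRows, Matrix.sub_mul, Matrix.mul_assoc, Matrix.neg_mul,
      sub_eq_add_neg]

theorem pow [Fintype K] [DecidableEq K] {f : (ι → ℂ) → Matrix K K ℂ} (h : IsILFROn S f)
    (m : ℕ) : IsILFROn S fun δ => f δ ^ m := by
  induction m with
  | zero => simpa using const (S := S) (1 : Matrix K K ℂ)
  | succ m ih => simpa [pow_succ] using ih.mul h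

theorem sum {α : Type*} (s : Finset α) {f : α → (ι → ℂ) → Matrix K L ℂ}
    (h : ∀ a ∈ s, IsILFROn S (f a)) : IsILFROn S fun δ => ∑ a ∈ s, f a δ := by
  classical
  induction s using Finset.induction_on with
  | empty =>
    simp only [Finset.sum_empty]
    exact const 0
  | insert a s ha ih =>
    simp only [Finset.sum_insert ha]
    exact (h a (Finset.mem_insert_self a s)).add (ih fun b hb => h b (Finset.mem_insert_of_mem hb))

theorem continuousOn {f : (ι → ℂ) → Matrix K L ℂ} (h : IsILFROn S f) : ContinuousOn f S := by
  obtain ⟨R, hR⟩ := h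
  have hscaling : Continuous R.scaling :=
    Continuous.matrix_diagonal (continuous_pi fun s => continuous_apply (R.π s))
  have hpencil : Continuous R.pencil := by
    unfold ILFR.pencil
    exact continuous_const.sub (hscaling.matrix_mul continuous_const)
  have hinput : Continuous R.input := by
    unfold ILFR.input
    exact (hscaling.matrix_mul continuous_const).sub continuous_const
  have hform : Continuous fun p : Matrix R.σ R.σ ℂ × Matrix R.σ L ℂ => R.D + R.C * p.1 * p.2 :=
    continuous_const.add ((continuous_const.matrix_mul continuous_fst).matrix_mul continuous_snd)
  refine ContinuousOn.congr (f := R.eval) (fun δ hδ => ContinuousAt.continuousWithinAt ?_)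
    fun δ hδ => (hR δ hδ).2
  have hdet := (isUnit_iff_isUnit_det _).mp (hR δ hδ).1
  have hinv : ContinuousAt (fun δ => (R.pencil δ)⁻¹) δ :=
    (continuousAt_matrix_inv _ (hdet.unit_spec ▸ NormedRing.inverse_continuousAt hdet.unit)).comp
      hpencil.continuousAt
  exact hform.continuousAt.comp (f := fun δ => ((R.pencil δ)⁻¹, R.input δ))
    (hinv.prodMk hinput.continuousAt)

theorem exists_sigma_fst [Fintype ι] [DecidableEq ι] {f : (ι → ℂ) → Matrix K L ℂ}
    (h : IsILFROn S f) :
    ∃ (g : ι → ℕ) (A E : Matrix (Σ i, Fin (g i)) (Σ i, Fin (g i)) ℂ)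
      (B F : Matrix (Σ i, Fin (g i)) L ℂ) (C : Matrix K (Σ i, Fin (g i)) ℂ) (D : Matrix K L ℂ),
      ∀ δ ∈ S, IsUnit (E - diagonal (fun x : Σ i, Fin (g i) => δ x.1) * A) ∧
        f δ = D + C * (E - diagonal (fun x : Σ i, Fin (g i) => δ x.1) * A)⁻¹ *
          (diagonal (fun x : Σ i, Fin (g i) => δ x.1) * B - F) := by
  obtain ⟨R, hR⟩ := h
  let g i := Fintype.card {s // R.π s = i}
  let e : (Σ i, Fin (g i)) ≃ R.σ :=
    (Equiv.sigmaCongrRight fun i => (Fintype.equivFin _).symm).trans (Equiv.sigmaFiberEquiv R.π)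
  have he : ∀ x, R.π (e x) = x.1 := fun x => ((Fintype.equivFin _).symm x.2).2
  let R' := R.reindex e
  refine ⟨g, R'.A, R'.E, R'.B, R'.F, R'.C, R'.D, fun δ hδ => ?_⟩
  have hscaling : diagonal (fun x : Σ i, Fin (g i) => δ x.1) = R'.scaling δ :=
    congrArg diagonal (funext fun x => congrArg δ (he x).symm)
  have hunit : IsUnit (R'.pencil δ) := by
    rw [ILFR.pencil_reindex, isUnit_iff_isUnit_det, det_submatrix_equiv_self,
      ← isUnit_iff_isUnit_det]
    exact (hR δ hδ).1
  rw [hscaling]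
  exact ⟨hunit, (hR δ hδ).2.trans (ILFR.eval_reindex δ R e).symm⟩

end IsILFROn

/-- The `n + 2` dimensions are indexed by `Fin (n + 2)`, the distinguished one being `0`; the
block matrices `A_M`, `B_M`, `C_M` are indexed by `Σ i ≠ 0, Fin (k i)`. -/
theorem stmt12_general (n : ℕ) (k : Fin (n + 2) → ℕ)
    (A : ∀ i j : Fin (n + 2), Matrix (Fin (k i)) (Fin (k j)) ℝ)
    (M : ({i : Fin (n + 2) // i ≠ 0} → ℂ) → Matrix (Fin (k 0)) (Fin (k 0)) ℂ)
    (hinv : ∀ δ : {i : Fin (n + 2) // i ≠ 0} → ℂ, (∀ i, ‖δ i‖ = 1) →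
      IsUnit ((1 : Matrix ((i : {i : Fin (n + 2) // i ≠ 0}) × Fin (k i.1))
          ((i : {i : Fin (n + 2) // i ≠ 0}) × Fin (k i.1)) ℂ) -
        Matrix.diagonal (fun x : (i : {i : Fin (n + 2) // i ≠ 0}) × Fin (k i.1) => δ x.1) *
          Matrix.of (fun x y : (i : {i : Fin (n + 2) // i ≠ 0}) × Fin (k i.1) =>
            ((A x.1.1 y.1.1).map Complex.ofReal) x.2 y.2)))
    (hM : ∀ δ : {i : Fin (n + 2) // i ≠ 0} → ℂ, (∀ i, ‖δ i‖ = 1) →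
      M δ = (A 0 0).map Complex.ofReal +
        Matrix.of (fun (a : Fin (k 0)) (y : (i : {i : Fin (n + 2) // i ≠ 0}) × Fin (k i.1)) =>
            ((A 0 y.1.1).map Complex.ofReal) a y.2) *
          ((1 : Matrix ((i : {i : Fin (n + 2) // i ≠ 0}) × Fin (k i.1))
              ((i : {i : Fin (n + 2) // i ≠ 0}) × Fin (k i.1)) ℂ) -
            Matrix.diagonal (fun x : (i : {i : Fin (n + 2) // i ≠ 0}) × Fin (k i.1) => δ x.1) *
              Matrix.of (fun x y : (i : {i : Fin (n + 2) // i ≠ 0}) × Fin (k i.1) =>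
                ((A x.1.1 y.1.1).map Complex.ofReal) x.2 y.2))⁻¹ *
          (Matrix.diagonal (fun x : (i : {i : Fin (n + 2) // i ≠ 0}) × Fin (k i.1) => δ x.1) *
            Matrix.of (fun (x : (i : {i : Fin (n + 2) // i ≠ 0}) × Fin (k i.1)) (b : Fin (k 0)) =>
              ((A x.1.1 0).map Complex.ofReal) x.2 b)))
    (hP : ∀ δ : {i : Fin (n + 2) // i ≠ 0} → ℂ, (∀ i, ‖δ i‖ = 1) →
      ∃ P : Matrix (Fin (k 0)) (Fin (k 0)) ℂ,
        P.PosDef ∧ (-((M δ)ᴴ * P * M δ - P)).PosDef) :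
    ∃ g : {i : Fin (n + 2) // i ≠ 0} → ℕ,
    ∃ A' E' : Matrix ((i : {i : Fin (n + 2) // i ≠ 0}) × Fin (g i))
        ((i : {i : Fin (n + 2) // i ≠ 0}) × Fin (g i)) ℂ,
    ∃ B' F' : Matrix ((i : {i : Fin (n + 2) // i ≠ 0}) × Fin (g i)) (Fin (k 0)) ℂ,
    ∃ C' : Matrix (Fin (k 0)) ((i : {i : Fin (n + 2) // i ≠ 0}) × Fin (g i)) ℂ,
    ∃ D' : Matrix (Fin (k 0)) (Fin (k 0)) ℂ,
      ∀ δ : {i : Fin (n + 2) // i ≠ 0} → ℂ, (∀ i, ‖δ i‖ = 1) →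
        IsUnit (E' -
          Matrix.diagonal (fun x : (i : {i : Fin (n + 2) // i ≠ 0}) × Fin (g i) => δ x.1) * A') ∧
        (D' + C' * (E' -
            Matrix.diagonal (fun x : (i : {i : Fin (n + 2) // i ≠ 0}) × Fin (g i) => δ x.1) * A')⁻¹ *
          (Matrix.diagonal (fun x : (i : {i : Fin (n + 2) // i ≠ 0}) × Fin (g i) => δ x.1) * B' -
            F')).PosDef ∧
        (-((M δ)ᴴ *
            (D' + C' * (E' -
                Matrix.diagonal
                  (fun x : (i : {i : Fin (n + 2) // i ≠ 0}) × Fin (g i) => δ x.1) * A')⁻¹ *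
              (Matrix.diagonal
                  (fun x : (i : {i : Fin (n + 2) // i ≠ 0}) × Fin (g i) => δ x.1) * B' - F')) *
            M δ -
            (D' + C' * (E' -
                Matrix.diagonal
                  (fun x : (i : {i : Fin (n + 2) // i ≠ 0}) × Fin (g i) => δ x.1) * A')⁻¹ *
              (Matrix.diagonal
                  (fun x : (i : {i : Fin (n + 2) // i ≠ 0}) × Fin (g i) => δ x.1) * B' -
                F')))).PosDef := by
  have hM_ILFR : IsILFROn (unitTorus _) M := IsILFROn.of_lfr Sigma.fst _ _ _ _ fun δ hδ =>
    ⟨hinv δ (mem_unitTorus.mp hδ), hM δ (mem_unitTorus.mp hδ)⟩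
  have hstable : ∀ δ ∈ unitTorus _, spectralRadius ℂ (M δ) < 1 := fun δ hδ => by
    obtain ⟨P, hPpos, hlyap⟩ := hP δ (mem_unitTorus.mp hδ)
    exact Matrix.spectralRadius_lt_one_of_lyapunov hPpos (by rwa [neg_sub] at hlyap)
  obtain ⟨T, hT, hcontr⟩ :=
    (isCompact_unitTorus _).exists_pow_contraction hM_ILFR.continuousOn hstable
  have hcert : IsILFROn (unitTorus _) fun δ => lyapunovSum (M δ) T :=
    IsILFROn.sum _ fun m _ => ((hM_ILFR.pow m).conjTranspose subset_rfl).mul (hM_ILFR.pow m)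
  obtain ⟨g, A', E', B', F', C', D', hrep⟩ := hcert.exists_sigma_fst
  refine ⟨g, A', E', B', F', C', D', fun δ hδ => ?_⟩
  obtain ⟨hunit, hval⟩ := hrep δ (mem_unitTorus.mpr hδ)
  rw [← hval]
  refine ⟨hunit, posDef_lyapunovSum _ hT, ?_⟩
  rw [← star_eq_conjTranspose, star_mul_lyapunovSum_mul_sub, neg_sub]
  exact hcontr δ (mem_unitTorus.mpr hδ)

/-- Theorem `th:nDbis`, purely discrete nD Roesser case: the
`n ≥ 2` dimensions are indexed by `Fin (n + 2)` (so `n` here is the number of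
dimensions minus two), the distinguished first dimension being index `0`.
The blocks `A i j ∈ ℝ^{k i × k j}` assemble into
`A_M = [A_{ij}]_{i,j ≠ 0}`, `B_M = [A_{i,0}]_{i ≠ 0}`, `C_M = [A_{0,j}]_{j ≠ 0}`,
`D_M = A_{0,0}`, via the index type `ι = Σ i ≠ 0, Fin (k i)`, and
`Δ̃(δ) = diag(δ_i I_{k i})_{i ≠ 0}`.  If for every `δ` in the torus there is
a Hermitian positive definite `P(δ)` with `M(δ)* P(δ) M(δ) − P(δ) < 0`, then
such a certificate exists in implicit linear fractional representation (ILFR)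
form `P^•(δ) = D^• + C^• (E^• − Δ̂(δ) A^•)⁻¹ (Δ̂(δ) B^• − F^•)` with
`Δ̂(δ) = diag(δ_i I_{g i})_{i ≠ 0}`. -/
theorem stmt12 (n : ℕ) (k : Fin (n + 2) → ℕ) (hk : ∀ i, 0 < k i)
    (A : ∀ i j : Fin (n + 2), Matrix (Fin (k i)) (Fin (k j)) ℝ)
    (M : ({i : Fin (n + 2) // i ≠ 0} → ℂ) → Matrix (Fin (k 0)) (Fin (k 0)) ℂ)
    (hinv : ∀ δ : {i : Fin (n + 2) // i ≠ 0} → ℂ, (∀ i, ‖δ i‖ = 1) →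
      IsUnit ((1 : Matrix ((i : {i : Fin (n + 2) // i ≠ 0}) × Fin (k i.1))
          ((i : {i : Fin (n + 2) // i ≠ 0}) × Fin (k i.1)) ℂ) -
        Matrix.diagonal (fun x : (i : {i : Fin (n + 2) // i ≠ 0}) × Fin (k i.1) => δ x.1) *
          Matrix.of (fun x y : (i : {i : Fin (n + 2) // i ≠ 0}) × Fin (k i.1) =>
            ((A x.1.1 y.1.1).map Complex.ofReal) x.2 y.2)))
    (hM : ∀ δ : {i : Fin (n + 2) // i ≠ 0} → ℂ, (∀ i, ‖δ i‖ = 1) →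
      M δ = (A 0 0).map Complex.ofReal +
        Matrix.of (fun (a : Fin (k 0)) (y : (i : {i : Fin (n + 2) // i ≠ 0}) × Fin (k i.1)) =>
            ((A 0 y.1.1).map Complex.ofReal) a y.2) *
          ((1 : Matrix ((i : {i : Fin (n + 2) // i ≠ 0}) × Fin (k i.1))
              ((i : {i : Fin (n + 2) // i ≠ 0}) × Fin (k i.1)) ℂ) -
            Matrix.diagonal (fun x : (i : {i : Fin (n + 2) // i ≠ 0}) × Fin (k i.1) => δ x.1) *
              Matrix.of (fun x y : (i : {i : Fin (n + 2) // i ≠ 0}) × Fin (k i.1) =>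
                ((A x.1.1 y.1.1).map Complex.ofReal) x.2 y.2))⁻¹ *
          (Matrix.diagonal (fun x : (i : {i : Fin (n + 2) // i ≠ 0}) × Fin (k i.1) => δ x.1) *
            Matrix.of (fun (x : (i : {i : Fin (n + 2) // i ≠ 0}) × Fin (k i.1)) (b : Fin (k 0)) =>
              ((A x.1.1 0).map Complex.ofReal) x.2 b)))
    (hP : ∀ δ : {i : Fin (n + 2) // i ≠ 0} → ℂ, (∀ i, ‖δ i‖ = 1) →
      ∃ P : Matrix (Fin (k 0)) (Fin (k 0)) ℂ,
        P.PosDef ∧ (-((M δ)ᴴ * P * M δ - P)).PosDef) :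
    ∃ g : {i : Fin (n + 2) // i ≠ 0} → ℕ,
    ∃ A' E' : Matrix ((i : {i : Fin (n + 2) // i ≠ 0}) × Fin (g i))
        ((i : {i : Fin (n + 2) // i ≠ 0}) × Fin (g i)) ℂ,
    ∃ B' F' : Matrix ((i : {i : Fin (n + 2) // i ≠ 0}) × Fin (g i)) (Fin (k 0)) ℂ,
    ∃ C' : Matrix (Fin (k 0)) ((i : {i : Fin (n + 2) // i ≠ 0}) × Fin (g i)) ℂ,
    ∃ D' : Matrix (Fin (k 0)) (Fin (k 0)) ℂ,
      ∀ δ : {i : Fin (n + 2) // i ≠ 0} → ℂ, (∀ i, ‖δ i‖ = 1) →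
        IsUnit (E' -
          Matrix.diagonal (fun x : (i : {i : Fin (n + 2) // i ≠ 0}) × Fin (g i) => δ x.1) * A') ∧
        (D' + C' * (E' -
            Matrix.diagonal (fun x : (i : {i : Fin (n + 2) // i ≠ 0}) × Fin (g i) => δ x.1) * A')⁻¹ *
          (Matrix.diagonal (fun x : (i : {i : Fin (n + 2) // i ≠ 0}) × Fin (g i) => δ x.1) * B' -
            F')).PosDef ∧
        (-((M δ)ᴴ *
            (D' + C' * (E' -
                Matrix.diagonal
                  (fun x : (i : {i : Fin (n + 2) // i ≠ 0}) × Fin (g i) => δ x.1) * A')⁻¹ *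
              (Matrix.diagonal
                  (fun x : (i : {i : Fin (n + 2) // i ≠ 0}) × Fin (g i) => δ x.1) * B' - F')) *
            M δ -
            (D' + C' * (E' -
                Matrix.diagonal
                  (fun x : (i : {i : Fin (n + 2) // i ≠ 0}) × Fin (g i) => δ x.1) * A')⁻¹ *
              (Matrix.diagonal
                  (fun x : (i : {i : Fin (n + 2) // i ≠ 0}) × Fin (g i) => δ x.1) * B' -
                F')))).PosDef :=
  stmt12_general n k A M hinv hM hP
end
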